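/- arXiv:1607.05001 — 3 statements merged into one kernel-verified Lean document; each statement's English description precedes it below -/
import Mathlib

section
/- Let A = (a_{cv}) be an m×n real matrix with nonnegative entries and no all-zero column, let x ∈ ℝ^n_{≥0}, and let y = Ax. For every iteration ℓ ≥ 1 and every variable node v with x_v > 0: μ^{(ℓ)}_v = x_v if and only if there exists c ∈ N(v) such that M^{(ℓ−1)}_{v'} = x_{v'} for every v' ∈ N(c) with v' ≠ v. -/
open scoped Classical
open Finset

variable {C V : Type*} [Fintype C] [Fintype V]

/-- The IPA lower/upper bounds `(μ^{(ℓ)}, M^{(ℓ)})` computed from measurement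
matrix `A` and measurement vector `y`. -/
noncomputable def ipa (A : C → V → ℝ) (y : C → ℝ) : ℕ → (V → ℝ) × (V → ℝ)
  | 0 => (fun _ => 0,
      fun v => sInf {r : ℝ | ∃ c, A c v ≠ 0 ∧ r = y c / A c v})
  | ℓ + 1 =>
      (fun v => sSup {r : ℝ | ∃ c, A c v ≠ 0 ∧
          r = max 0 ((y c - ∑ v' ∈ Finset.univ.filter (fun v' => v' ≠ v),
              A c v' * (ipa A y ℓ).2 v') / A c v)},
       fun v => sInf {r : ℝ | ∃ c, A c v ≠ 0 ∧
          r = (y c - ∑ v' ∈ Finset.univ.filter (fun v' => v' ≠ v),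
              A c v' * (ipa A y ℓ).1 v') / A c v})

/-- IPA lower bound `μ^{(ℓ)}_v`. -/
noncomputable def ipaMu (A : C → V → ℝ) (y : C → ℝ) (ℓ : ℕ) (v : V) : ℝ := (ipa A y ℓ).1 v

/-- IPA upper bound `M^{(ℓ)}_v`. -/
noncomputable def ipaM (A : C → V → ℝ) (y : C → ℝ) (ℓ : ℕ) (v : V) : ℝ := (ipa A y ℓ).2 v

/-- Neighbourhood `N(v)` of a variable node. -/
noncomputable def Nv (A : C → V → ℝ) (v : V) : Finset C := Finset.univ.filter fun c => A c v ≠ 0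

/-- Neighbourhood `N(c)` of a measurement node. -/
noncomputable def Nc (A : C → V → ℝ) (c : C) : Finset V := Finset.univ.filter fun v => A c v ≠ 0

/-- Neighbourhood `N(T)` of a set of variable nodes. -/
noncomputable def NT (A : C → V → ℝ) (T : Finset V) : Finset C :=
  Finset.univ.filter fun c => ∃ v ∈ T, A c v ≠ 0

/-- `N_T(c) = N(c) ∩ T`. -/
noncomputable def NTc (A : C → V → ℝ) (T : Finset V) (c : C) : Finset V :=
  T.filter fun v => A c v ≠ 0

/-- A stopping set: every neighbouring measurement node is connected at least twice to `T`. -/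
def StoppingSet (A : C → V → ℝ) (T : Finset V) : Prop :=
  ∀ c ∈ NT A T, 2 ≤ (NTc A T c).card

/-- The set `S` of variable nodes outside `T` connected only to `N(T)`. -/
noncomputable def Sset (A : C → V → ℝ) (T : Finset V) : Finset V :=
  Finset.univ.filter fun v => v ∉ T ∧ ∀ c, A c v ≠ 0 → c ∈ NT A T

/-- The termatiko condition on a set `T` of variable nodes. -/
def TermatikoCond (A : C → V → ℝ) (T : Finset V) : Prop :=
  ∀ c ∈ NT A T,
    (∃ v ∈ Sset A T, A c v ≠ 0) ∨
    2 ≤ ((NTc A T c).filter fun v => ∀ c', A c' v ≠ 0 → 2 ≤ (NTc A T c').card).card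

/-- Real-valued indicator vector `1_T` of a set of variable nodes. -/
noncomputable def indVec (T : Finset V) : V → ℝ := fun v => if v ∈ T then 1 else 0

/-- The measurement vector `A · 1_T`. -/
noncomputable def measT (A : C → V → ℝ) (T : Finset V) : C → ℝ :=
  fun c => ∑ v, A c v * indVec T v

/-- `T` is a termatiko set of `A`: the IPA run on `A · 1_T` keeps all lower bounds at zero. -/
def IsTermatiko (A : C → V → ℝ) (T : Finset V) : Prop :=
  ∀ (ℓ : ℕ) (v : V), ipaMu A (measT A T) ℓ v = 0

/-- `A` is a binary (0/1) matrix. -/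
def Binary (A : C → V → ℝ) : Prop := ∀ c v, A c v = 0 ∨ A c v = 1

/-- `A` has no all-zero column. -/
def NoZeroCol (A : C → V → ℝ) : Prop := ∀ v, ∃ c, A c v ≠ 0

/-- `A` has nonnegative entries. -/
def MatNonneg (A : C → V → ℝ) : Prop := ∀ c v, 0 ≤ A c v

/-!
Since `y = A x` with `A, x ≥ 0`, induction on `ℓ` gives `μ^{(ℓ)} ≤ x ≤ M^{(ℓ)}`. Substituting
`y_c = Σ_{v'} a_{cv'} x_{v'}`, the message from `c` to `v` computed from `M^{(ℓ)}` is
`x_v − (Σ_{v' ≠ v} a_{cv'} (M^{(ℓ)}_{v'} − x_{v'})) / a_{cv}`, with a nonnegative sum. So every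
message is at most `x_v`, their maximum `μ^{(ℓ+1)}_v` equals `x_v` iff one of them does, and, as
`x_v > 0` makes the clamp at `0` harmless, a message equals `x_v` iff every term of its sum vanishes.
-/

section FiniteExtrema

variable {ι α : Type*} [ConditionallyCompleteLinearOrder α] {P : ι → Prop} {f : ι → α} {b : α}

lemma csSup_setOf_le (hP : ∃ i, P i) (hle : ∀ i, P i → f i ≤ b) :
    sSup {r | ∃ i, P i ∧ r = f i} ≤ b := by
  obtain ⟨i₀, hi₀⟩ := hP
  exact csSup_le ⟨f i₀, i₀, hi₀, rfl⟩ (by rintro _ ⟨i, hi, rfl⟩; exact hle i hi)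

lemma le_csInf_setOf (hP : ∃ i, P i) (hle : ∀ i, P i → b ≤ f i) :
    b ≤ sInf {r | ∃ i, P i ∧ r = f i} := by
  obtain ⟨i₀, hi₀⟩ := hP
  exact le_csInf ⟨f i₀, i₀, hi₀, rfl⟩ (by rintro _ ⟨i, hi, rfl⟩; exact hle i hi)

lemma csSup_setOf_eq_iff_exists [Finite ι] (hP : ∃ i, P i) (hle : ∀ i, P i → f i ≤ b) :
    sSup {r | ∃ i, P i ∧ r = f i} = b ↔ ∃ i, P i ∧ f i = b := by
  have hfin : {r | ∃ i, P i ∧ r = f i}.Finite :=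
    (Set.finite_range f).subset (by rintro _ ⟨i, -, rfl⟩; exact ⟨i, rfl⟩)
  constructor
  · rintro rfl
    obtain ⟨i₀, hi₀⟩ := hP
    have hne : {r | ∃ i, P i ∧ r = f i}.Nonempty := ⟨f i₀, i₀, hi₀, rfl⟩
    obtain ⟨i, hi, hsup⟩ := hne.csSup_mem hfin
    exact ⟨i, hi, hsup.symm⟩
  · rintro ⟨i, hi, rfl⟩
    exact (csSup_setOf_le hP hle).antisymm (le_csSup hfin.bddAbove ⟨i, hi, rfl⟩)

end FiniteExtrema

lemma max_zero_sub_eq_self_iff {α : Type*} [AddCommGroup α] [LinearOrder α] [IsOrderedAddMonoid α]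
    {t s : α} (ht : 0 < t) (hs : 0 ≤ s) : max 0 (t - s) = t ↔ s = 0 := by
  rw [max_eq_iff]
  constructor
  · rintro (⟨h, -⟩ | ⟨h, -⟩)
    · exact (ht.ne h).elim
    · exact sub_eq_self.1 h
  · rintro rfl
    exact Or.inr ⟨sub_zero t, by rw [sub_zero]; exact ht.le⟩

/-- `μ^{(ℓ+1)}_{c→v}` is the positive part of `ipaMsg A y M^{(ℓ)} c v`, and `M^{(ℓ+1)}_{c→v}` is
`ipaMsg A y μ^{(ℓ)} c v`. -/
noncomputable def ipaMsg (A : C → V → ℝ) (y : C → ℝ) (z : V → ℝ) (c : C) (v : V) : ℝ :=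
  (y c - ∑ v' ∈ Finset.univ.filter (fun v' => v' ≠ v), A c v' * z v') / A c v

section Messages

omit [Fintype C]

variable {A : C → V → ℝ} {x : V → ℝ} {y : C → ℝ}

lemma ipaMu_succ (ℓ : ℕ) (v : V) :
    ipaMu A y (ℓ + 1) v = sSup {r | ∃ c, A c v ≠ 0 ∧ r = max 0 (ipaMsg A y (ipaM A y ℓ) c v)} :=
  rfl

lemma ipaMsg_eq_sub (hy : ∀ c, y c = ∑ v, A c v * x v) (z : V → ℝ) {c : C} {v : V}
    (hc : A c v ≠ 0) :
    ipaMsg A y z c v =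
      x v - (∑ v' ∈ Finset.univ.filter (fun v' => v' ≠ v), A c v' * (z v' - x v')) / A c v := by
  rw [ipaMsg, hy, ← add_sum_erase _ _ (mem_univ v), filter_ne', eq_sub_iff_add_eq, ← add_div,
    div_eq_iff hc]
  simp only [mul_sub, Finset.sum_sub_distrib]
  ring

lemma ipaMsg_le_of_le (hA : MatNonneg A) (hy : ∀ c, y c = ∑ v, A c v * x v) {z : V → ℝ}
    (hxz : ∀ v, x v ≤ z v) {c : C} {v : V} (hc : A c v ≠ 0) : ipaMsg A y z c v ≤ x v := by
  rw [ipaMsg_eq_sub hy z hc, sub_le_self_iff]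
  exact div_nonneg (Finset.sum_nonneg fun v' _ => mul_nonneg (hA c v') (sub_nonneg.2 (hxz v')))
    (hA c v)

lemma le_ipaMsg_of_le (hA : MatNonneg A) (hy : ∀ c, y c = ∑ v, A c v * x v) {z : V → ℝ}
    (hzx : ∀ v, z v ≤ x v) {c : C} {v : V} (hc : A c v ≠ 0) : x v ≤ ipaMsg A y z c v := by
  rw [ipaMsg_eq_sub hy z hc, le_sub_self_iff]
  exact div_nonpos_of_nonpos_of_nonneg
    (Finset.sum_nonpos fun v' _ => mul_nonpos_of_nonneg_of_nonpos (hA c v') (sub_nonpos.2 (hzx v')))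
    (hA c v)

lemma le_ipaM_zero (hA : MatNonneg A) (hcol : NoZeroCol A) (hx : ∀ v, 0 ≤ x v)
    (hy : ∀ c, y c = ∑ v, A c v * x v) (v : V) : x v ≤ ipaM A y 0 v := by
  refine le_csInf_setOf (hcol v) fun c hc => ?_
  rw [le_div_iff₀ ((hA c v).lt_of_ne' hc), mul_comm, hy c]
  exact Finset.single_le_sum (fun v' _ => mul_nonneg (hA c v') (hx v')) (Finset.mem_univ v)

lemma ipaMu_le_and_le_ipaM (hA : MatNonneg A) (hcol : NoZeroCol A) (hx : ∀ v, 0 ≤ x v)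
    (hy : ∀ c, y c = ∑ v, A c v * x v) (ℓ : ℕ) :
    (∀ v, ipaMu A y ℓ v ≤ x v) ∧ ∀ v, x v ≤ ipaM A y ℓ v := by
  induction ℓ with
  | zero => exact ⟨hx, le_ipaM_zero hA hcol hx hy⟩
  | succ ℓ ih =>
    refine ⟨fun v => ?_, fun v => ?_⟩
    · exact csSup_setOf_le (hcol v) fun c hc => max_le (hx v) (ipaMsg_le_of_le hA hy ih.2 hc)
    · exact le_csInf_setOf (hcol v) fun c hc => le_ipaMsg_of_le hA hy ih.1 hc

lemma max_zero_ipaMsg_eq_iff (hA : MatNonneg A) (hy : ∀ c, y c = ∑ v, A c v * x v) {z : V → ℝ}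
    (hxz : ∀ v, x v ≤ z v) {c : C} {v : V} (hc : A c v ≠ 0) (hxv : 0 < x v) :
    max 0 (ipaMsg A y z c v) = x v ↔ ∀ v', A c v' ≠ 0 → v' ≠ v → z v' = x v' := by
  have hterm : ∀ v', 0 ≤ A c v' * (z v' - x v') :=
    fun v' => mul_nonneg (hA c v') (sub_nonneg.2 (hxz v'))
  rw [ipaMsg_eq_sub hy z hc,
    max_zero_sub_eq_self_iff hxv (div_nonneg (Finset.sum_nonneg fun v' _ => hterm v') (hA c v)),
    div_eq_zero_iff, or_iff_left hc, Finset.sum_eq_zero_iff_of_nonneg fun v' _ => hterm v']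
  simp only [Finset.mem_filter, Finset.mem_univ, true_and, mul_eq_zero, sub_eq_zero,
    or_iff_not_imp_left]
  exact forall_congr' fun _ => Imp.swap

end Messages

/-- for `ℓ ≥ 1` and `x_v > 0`, the lower bound reaches `x_v` iff
some neighbour `c` has all other neighbours' upper bounds exact at iteration `ℓ-1`. -/
theorem ipa_lower_exact_iff {m n : ℕ} (A : Fin m → Fin n → ℝ)
    (hA : MatNonneg A) (hcol : NoZeroCol A)
    (x : Fin n → ℝ) (hx : ∀ v, 0 ≤ x v)
    (y : Fin m → ℝ) (hy : ∀ c, y c = ∑ v, A c v * x v) :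
    ∀ (ℓ : ℕ) (v : Fin n), 0 < x v →
      (ipaMu A y (ℓ + 1) v = x v ↔
        ∃ c, A c v ≠ 0 ∧ ∀ v', A c v' ≠ 0 → v' ≠ v → ipaM A y ℓ v' = x v') := by
  intro ℓ v hxv
  have hM := (ipaMu_le_and_le_ipaM hA hcol hx hy ℓ).2
  rw [ipaMu_succ, csSup_setOf_eq_iff_exists (hcol v)
    fun c hc => max_le hxv.le (ipaMsg_le_of_le hA hy hM hc)]
  exact exists_congr fun c => and_congr_right fun hc => max_zero_ipaMsg_eq_iff hA hy hM hc hxv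
end

section
/- Let A ∈ {0,1}^{m×n} be a binary measurement matrix with no all-zero column. Then every stopping set T ⊆ V is a termatiko set of A: running the IPA on y = A·1_T yields μ^{(ℓ)}_v = 0 for every v ∈ V and every ℓ ≥ 0. -/
open scoped Classical
open Finset

variable {C V : Type*} [Fintype C] [Fintype V]

/-!
For binary `A` the measurement is `y_c = |N_T(c)|`. As long as all lower bounds are `0`, the
upper bounds are the initial ones, `M_v = min_{c ∈ N(v)} y_c`, which is `≥ 2` on `T` because a
stopping set meets each of its measurement nodes at least twice. The lower message from `c` to `v`
is then at most `|N_T(c)| - 2 |N_T(c) \ {v}| ≤ 0`, using once more that `|N_T(c)| ≥ 2` when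
`v ∈ N_T(c)`; so the lower bounds stay `0`, and the upper bounds stay at `M^{(0)}`.
-/

section Binary

omit [Fintype C] [Fintype V]

theorem Binary.matNonneg {A : C → V → ℝ} (hA : Binary A) : MatNonneg A := fun c v => by
  rcases hA c v with h | h <;> simp [h]

theorem Binary.eq_one {A : C → V → ℝ} (hA : Binary A) {c : C} {v : V} (h : A c v ≠ 0) :
    A c v = 1 :=
  (hA c v).resolve_left h

end Binary

section Ipa

omit [Fintype C]

variable {A : C → V → ℝ} {y : C → ℝ}

theorem ipaM_succ_eq_ipaM_zero {ℓ : ℕ} (hμ : ∀ v, ipaMu A y ℓ v = 0) :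
    ipaM A y (ℓ + 1) = ipaM A y 0 := by
  have hμ' : (ipa A y ℓ).1 = 0 := funext hμ
  funext v
  simp only [ipaM, ipa, hμ', Pi.zero_apply, mul_zero, sum_const_zero, sub_zero]

theorem ipaMu_succ_eq_zero (hA : MatNonneg A) {ℓ : ℕ}
    (hy : ∀ c v, A c v ≠ 0 → y c ≤ ∑ v' ∈ univ.filter (· ≠ v), A c v' * ipaM A y ℓ v') (v : V) :
    ipaMu A y (ℓ + 1) v = 0 := by
  refine le_antisymm (Real.sSup_nonpos ?_) (Real.sSup_nonneg ?_) <;> rintro _ ⟨c, hc, rfl⟩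
  · exact max_le le_rfl (div_nonpos_of_nonpos_of_nonneg (sub_nonpos.2 (hy c v hc)) (hA c v))
  · exact le_max_left _ _

theorem ipaMu_eq_zero_of_le_sum_ipaM_zero (hA : MatNonneg A)
    (hy : ∀ c v, A c v ≠ 0 → y c ≤ ∑ v' ∈ univ.filter (· ≠ v), A c v' * ipaM A y 0 v')
    (ℓ : ℕ) (v : V) : ipaMu A y ℓ v = 0 := by
  suffices h : ∀ ℓ, (∀ v, ipaMu A y ℓ v = 0) ∧ ipaM A y ℓ = ipaM A y 0 from (h ℓ).1 v
  intro ℓ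
  induction ℓ with
  | zero => exact ⟨fun _ => rfl, rfl⟩
  | succ ℓ ih =>
    obtain ⟨hμ, hM⟩ := ih
    exact ⟨ipaMu_succ_eq_zero hA (hM ▸ hy), ipaM_succ_eq_ipaM_zero hμ⟩

theorem ipaM_zero_nonneg (hA : MatNonneg A) (hy : ∀ c, 0 ≤ y c) (v : V) : 0 ≤ ipaM A y 0 v :=
  Real.sInf_nonneg fun _ ⟨c, _, hr⟩ => hr ▸ div_nonneg (hy c) (hA c v)

theorem le_ipaM_zero_s9 {b : ℝ} {c : C} {v : V} (hcv : A c v ≠ 0)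
    (hb : ∀ c, A c v ≠ 0 → b ≤ y c / A c v) : b ≤ ipaM A y 0 v :=
  le_csInf ⟨_, c, hcv, rfl⟩ fun _ ⟨c', hc', hr⟩ => hr ▸ hb c' hc'

end Ipa

theorem Finset.card_le_two_mul_card_erase {α : Type*} [DecidableEq α] {s : Finset α} {a : α}
    (h : a ∈ s → 2 ≤ #s) : #s ≤ 2 * #(s.erase a) := by
  by_cases ha : a ∈ s
  · have := h ha
    rw [card_erase_of_mem ha]
    omega
  · rw [erase_eq_of_notMem ha]
    omega

section StoppingSet

variable {A : C → V → ℝ} {T : Finset V}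

omit [Fintype C] in
theorem measT_eq_card (hA : Binary A) (c : C) : measT A T c = #(NTc A T c) := by
  have hterm : ∀ v, A c v * indVec T v = if v ∈ T ∧ A c v ≠ 0 then 1 else 0 := by
    intro v
    by_cases hv : A c v = 0
    · simp [hv]
    · simp [indVec, hA.eq_one hv]
  simp only [measT, hterm, sum_boole, ← filter_filter, filter_mem_eq_inter, univ_inter, NTc]

omit [Fintype V] in
theorem StoppingSet.two_le_card_NTc (hT : StoppingSet A T) {c : C} {v : V}
    (hv : v ∈ NTc A T c) : 2 ≤ #(NTc A T c) := by
  rw [NTc, mem_filter] at hv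
  exact hT c (mem_filter.2 ⟨mem_univ c, v, hv⟩)

theorem StoppingSet.two_le_ipaM_zero (hA : Binary A) (hT : StoppingSet A T) {c : C} {v : V}
    (hv : v ∈ T) (hcv : A c v ≠ 0) : 2 ≤ ipaM A (measT A T) 0 v := by
  refine le_ipaM_zero_s9 hcv fun c' hc' => ?_
  rw [hA.eq_one hc', div_one, measT_eq_card hA]
  exact_mod_cast hT.two_le_card_NTc (mem_filter.2 ⟨hv, hc'⟩)

theorem StoppingSet.measT_le_sum (hA : Binary A) (hT : StoppingSet A T) {M : V → ℝ}
    (hM0 : ∀ v, 0 ≤ M v) (hM2 : ∀ c v, v ∈ T → A c v ≠ 0 → 2 ≤ M v) (c : C) (v : V) :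
    measT A T c ≤ ∑ v' ∈ univ.filter (· ≠ v), A c v' * M v' := by
  set s := (NTc A T c).erase v
  have hcard : (#(NTc A T c) : ℝ) ≤ 2 * #s := by
    exact_mod_cast card_le_two_mul_card_erase hT.two_le_card_NTc
  have hs : ∀ w ∈ s, 2 ≤ A c w * M w := by
    intro w hw
    obtain ⟨hwT, hcw⟩ := mem_filter.1 (mem_of_mem_erase hw)
    rw [hA.eq_one hcw, one_mul]
    exact hM2 c w hwT hcw
  have hsub : s ⊆ univ.filter (· ≠ v) := fun w hw => by simp [ne_of_mem_erase hw]
  calc measT A T c = #(NTc A T c) := measT_eq_card hA c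
    _ ≤ #s • (2 : ℝ) := by rw [nsmul_eq_mul]; linarith
    _ ≤ ∑ w ∈ s, A c w * M w := card_nsmul_le_sum s _ 2 hs
    _ ≤ ∑ v' ∈ univ.filter (· ≠ v), A c v' * M v' :=
      sum_le_sum_of_subset_of_nonneg hsub fun w _ _ => mul_nonneg (hA.matNonneg c w) (hM0 w)

end StoppingSet

theorem stoppingSet_isTermatiko_general {m n : ℕ} (A : Fin m → Fin n → ℝ)
    (hbin : Binary A)
    (T : Finset (Fin n)) (hT : StoppingSet A T) :
    IsTermatiko A T := by
  have hy : ∀ c, 0 ≤ measT A T c := fun c => by rw [measT_eq_card hbin]; positivity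
  exact ipaMu_eq_zero_of_le_sum_ipaM_zero hbin.matNonneg fun c v _ =>
    hT.measT_le_sum hbin (ipaM_zero_nonneg hbin.matNonneg hy)
      (fun _ _ hv hcv => hT.two_le_ipaM_zero hbin hv hcv) c v

/-- every stopping set of a binary measurement matrix is a
termatiko set: the IPA run on `A·1_T` keeps all lower bounds at zero. -/
theorem stoppingSet_isTermatiko {m n : ℕ} (A : Fin m → Fin n → ℝ)
    (hbin : Binary A) (hcol : NoZeroCol A)
    (T : Finset (Fin n)) (hT : StoppingSet A T) :
    IsTermatiko A T :=
  stoppingSet_isTermatiko_general A hbin T hT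
end

section
/- Let A be an m×n matrix with Tanner graph on variable nodes V and measurement nodes C, and let T ⊆ V be nonempty and satisfy the termatiko condition. Then T ∪ S is a stopping set, where S = {v ∈ V∖T : N(v) ⊆ N(T)}. In particular, every nonempty set satisfying the termatiko condition (hence every nonempty termatiko set) is contained in a stopping set. -/
open scoped Classical
open Finset

variable {C V : Type*} [Fintype C] [Fintype V]

theorem mem_NT {C V : Type*} [Fintype C] {A : C → V → ℝ} {T : Finset V} {c : C} :
    c ∈ NT A T ↔ ∃ v ∈ T, A c v ≠ 0 := by
  simp [NT]

theorem mem_NTc {C V : Type*} {A : C → V → ℝ} {T : Finset V} {c : C} {v : V} :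
    v ∈ NTc A T c ↔ v ∈ T ∧ A c v ≠ 0 :=
  mem_filter

theorem mem_Sset {A : C → V → ℝ} {T : Finset V} {v : V} :
    v ∈ Sset A T ↔ v ∉ T ∧ ∀ c, A c v ≠ 0 → c ∈ NT A T := by
  simp [Sset]

theorem NTc_mono {C V : Type*} (A : C → V → ℝ) {T U : Finset V} (h : T ⊆ U) (c : C) :
    NTc A T c ⊆ NTc A U c :=
  filter_subset_filter _ h

-- The explicit `[DecidableEq V]` lets `T ∪ Sset A T` match the union on `Fin n`, which does not
-- use the classical instance opened above.
theorem NT_union_Sset [DecidableEq V] (A : C → V → ℝ) (T : Finset V) :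
    NT A (T ∪ Sset A T) = NT A T := by
  ext c
  simp only [mem_NT, mem_union]
  constructor
  · rintro ⟨v, hvT | hvS, hAv⟩
    · exact ⟨v, hvT, hAv⟩
    · exact mem_NT.mp ((mem_Sset.mp hvS).2 c hAv)
  · rintro ⟨v, hvT, hAv⟩
    exact ⟨v, Or.inl hvT, hAv⟩

theorem TermatikoCond.stoppingSet_union_Sset [DecidableEq V] {A : C → V → ℝ} {T : Finset V}
    (hT : TermatikoCond A T) : StoppingSet A (T ∪ Sset A T) := by
  intro c hc
  rw [NT_union_Sset] at hc
  have hmono : NTc A T c ⊆ NTc A (T ∪ Sset A T) c := NTc_mono A subset_union_left c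
  rcases hT c hc with ⟨v, hvS, hAv⟩ | htwo
  · -- a node of `S` and a node of `T` are two distinct neighbours of `c` in `T ∪ S`
    obtain ⟨w, hwT, hAw⟩ := mem_NT.mp hc
    have hvw : v ≠ w := fun h => (mem_Sset.mp hvS).1 (h ▸ hwT)
    exact one_lt_card.mpr ⟨v, mem_NTc.mpr ⟨mem_union_right _ hvS, hAv⟩,
      w, hmono (mem_NTc.mpr ⟨hwT, hAw⟩), hvw⟩
  · exact htwo.trans (card_le_card ((filter_subset _ _).trans hmono))

theorem termatikoCond_union_stopping_general {m n : ℕ} (A : Fin m → Fin n → ℝ)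
    (T : Finset (Fin n)) (hT : TermatikoCond A T) :
    StoppingSet A (T ∪ Sset A T) ∧
    ∃ U : Finset (Fin n), StoppingSet A U ∧ T ⊆ U :=
  ⟨hT.stoppingSet_union_Sset, T ∪ Sset A T, hT.stoppingSet_union_Sset, subset_union_left⟩

/-- if a nonempty `T` satisfies the termatiko condition, then
`T ∪ S` is a stopping set; in particular `T` is contained in a stopping set. -/
theorem termatikoCond_union_stopping {m n : ℕ} (A : Fin m → Fin n → ℝ)
    (T : Finset (Fin n)) (hne : T.Nonempty) (hT : TermatikoCond A T) :
    StoppingSet A (T ∪ Sset A T) ∧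
    ∃ U : Finset (Fin n), StoppingSet A U ∧ T ⊆ U :=
  termatikoCond_union_stopping_general A T hT
end
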